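/- arXiv:1910.09816 — 2 statements merged into one kernel-verified Lean document; each statement's English description precedes it below -/
import Mathlib

section
/- Let (A,φ) be a PCA over Set. Then Asm(A,φ) is a regular category: it has finite limits, every morphism factors as a regular epimorphism followed by a monomorphism, and regular epimorphisms are stable under pullback. Moreover, the functors Γ: Asm(A,φ) → Set and ∇: Set → Asm(A,φ) preserve finite limits and regular epimorphisms. -/
open CategoryTheory

namespace PcaPaper

/-- A partial binary application on `A`. -/
abbrev PApp (A : Type) := A → A → Option A

variable {A B C : Type}

/-- Definedness of the application of inhabited subsets. -/
def SubDef (app : PApp A) (U V : Set A) : Prop :=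
  ∀ a ∈ U, ∀ b ∈ V, (app a b).isSome

/-- Application of subsets. -/
def SubApp (app : PApp A) (U V : Set A) : Set A :=
  {c | ∃ a ∈ U, ∃ b ∈ V, app a b = some c}

/-- Terms with `n` variables, built from variables by application. -/
inductive Term (n : ℕ) : Type
  | var : Fin n → Term n
  | op : Term n → Term n → Term n

/-- Evaluation of a term at a vector of elements, as a partial function. -/
def Term.eval (app : PApp A) : {n : ℕ} → Term n → (Fin n → A) → Option A
  | _, .var i, ρ => some (ρ i)
  | _, .op s t, ρ => (Term.eval app s ρ).bind fun x => (Term.eval app t ρ).bind fun y => app x y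

/-- Evaluation of a term at a vector of subsets. -/
def Term.subEval (app : PApp A) : {n : ℕ} → Term n → (Fin n → Set A) → Set A
  | _, .var i, ρ => ρ i
  | _, .op s t, ρ => SubApp app (Term.subEval app s ρ) (Term.subEval app t ρ)

/-- Definedness of the evaluation of a term at a vector of subsets. -/
def Term.subDef (app : PApp A) : {n : ℕ} → Term n → (Fin n → Set A) → Prop
  | _, .var _, _ => True
  | _, .op s t, ρ => Term.subDef app s ρ ∧ Term.subDef app t ρ ∧
      SubDef app (Term.subEval app s ρ) (Term.subEval app t ρ)

/-- `r · a 0 · … · a (k-1)`, associated to the left. -/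
def appVec (app : PApp A) (r : A) : (k : ℕ) → (Fin k → A) → Option A
  | 0, _ => some r
  | k + 1, a => (appVec app r k fun i => a i.castSucc).bind fun s => app s (a (Fin.last k))

/-- `U` realizes `λ x₀ … xₙ. t`. -/
def Realizes (app : PApp A) (U : Set A) {n : ℕ} (t : Term (n + 1)) : Prop :=
  ∀ r ∈ U, ∀ a : Fin (n + 1) → A,
    (appVec app r n fun i => a i.castSucc).isSome ∧
    ∀ b, Term.eval app t a = some b → appVec app r (n + 1) a = some b

/-- A filter of inhabited subsets on a partial applicative structure. -/
structure IsPcaFilter (app : PApp A) (φ : Set (Set A)) : Prop where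
  nonempty : ∀ U ∈ φ, U.Nonempty
  upward : ∀ U ∈ φ, ∀ V : Set A, U ⊆ V → V ∈ φ
  appClosed : ∀ U ∈ φ, ∀ V ∈ φ, SubDef app U V → SubApp app U V ∈ φ

/-- Combinatorial completeness of a set of subsets. -/
def CombComplete (app : PApp A) (G : Set (Set A)) : Prop :=
  ∀ (n : ℕ) (t : Term (n + 1)), ∃ U ∈ G, Realizes app U t

/-- The least filter containing `G`. -/
def genFilter (app : PApp A) (G : Set (Set A)) : Set (Set A) :=
  ⋂₀ {ψ | IsPcaFilter app ψ ∧ G ⊆ ψ}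

/-- A (relative) PCA over the base category `Set`: a nonempty set with a partial
binary application and a combinatorially complete filter of inhabited subsets. -/
structure PCA (A : Type) where
  app : PApp A
  nonemptyCarrier : Nonempty A
  filt : Set (Set A)
  isFilter : IsPcaFilter app filt
  complete : CombComplete app filt

/- ### Helper lemmas -/

lemma isSome_bind_left {α β : Type} {o : Option α} {f : α → Option β}
    (h : (o.bind f).isSome) : o.isSome := by
  cases o <;> simp_all

lemma appVec_two_pre (app : PApp A) (r u v x : A) :
    (appVec app r 2 fun i => (![u, v, x] : Fin 3 → A) i.castSucc)
      = (app r u).bind fun s => app s v := rfl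

lemma appVec_three_cons (app : PApp A) (r u v x : A) :
    appVec app r (2 + 1) ![u, v, x]
      = ((app r u).bind fun s => app s v).bind fun s => app s x := rfl

lemma eval_comp_term (app : PApp A) (u v x : A) :
    Term.eval app (Term.op (.var 1) (.op (.var 0) (.var 2))) ![u, v, x]
      = (app u x).bind fun y => app v y := by
  simp [Term.eval]

lemma eval_app2_term (app : PApp A) (u v x : A) :
    Term.eval app (Term.op (.op (.var 0) (.var 1)) (.var 2)) ![u, v, x]
      = (app u v).bind fun d => app d x := by
  simp [Term.eval]

lemma filt_nonempty (P : PCA A) : ∃ U, U ∈ P.filt := by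
  obtain ⟨U, hU, -⟩ := P.complete 0 (.var 0)
  exact ⟨U, hU⟩

lemma univ_mem_filt (P : PCA A) : (Set.univ : Set A) ∈ P.filt := by
  obtain ⟨U, hU⟩ := filt_nonempty P
  exact P.isFilter.upward U hU _ (Set.subset_univ U)

lemma exists_ireal (P : PCA A) :
    ∃ U ∈ P.filt, ∀ r ∈ U, ∀ a : A, P.app r a = some a := by
  obtain ⟨U, hU, hreal⟩ := P.complete 0 (.var 0)
  refine ⟨U, hU, fun r hr a => ?_⟩
  have h := (hreal r hr fun _ => a).2 a (by simp [Term.eval])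
  simpa [appVec] using h

lemma realizes3_chain (P : PCA A) {T : Set A} {t : Term (2 + 1)}
    (hreal : Realizes P.app T t) {r : A} (hr : r ∈ T) (u v : A) :
    ∃ s w, P.app r u = some s ∧ P.app s v = some w := by
  have h1 : ((P.app r u).bind fun s => P.app s v).isSome := by
    have h := (hreal r hr ![u, v, v]).1
    rwa [appVec_two_pre] at h
  cases hru : P.app r u with
  | none => rw [hru] at h1; simp at h1
  | some s =>
    rw [hru] at h1
    simp only [Option.bind_some] at h1
    obtain ⟨w, hw⟩ := Option.isSome_iff_exists.mp h1
    exact ⟨s, w, rfl, hw⟩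

lemma exists_tracker3 (P : PCA A) (t : Term (2 + 1)) {U V : Set A}
    (hU : U ∈ P.filt) (hV : V ∈ P.filt) :
    ∃ W ∈ P.filt, ∀ w ∈ W, ∃ u ∈ U, ∃ v ∈ V,
      ∀ x c : A, Term.eval P.app t ![u, v, x] = some c → P.app w x = some c := by
  obtain ⟨T, hT, hreal⟩ := P.complete 2 t
  have hdef1 : SubDef P.app T U := by
    intro r hr u _
    obtain ⟨s, w, hs, -⟩ := realizes3_chain P hreal hr u u
    simp [hs]
  have hTU := P.isFilter.appClosed T hT U hU hdef1
  have hdef2 : SubDef P.app (SubApp P.app T U) V := by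
    rintro s ⟨r, hr, u, hu, hru⟩ v _
    obtain ⟨s', w, hs', hw⟩ := realizes3_chain P hreal hr u v
    rw [hru] at hs'
    injection hs' with h
    subst h
    simp [hw]
  refine ⟨SubApp P.app (SubApp P.app T U) V,
    P.isFilter.appClosed _ hTU V hV hdef2, ?_⟩
  rintro w ⟨s, ⟨r, hr, u, hu, hru⟩, v, hv, hsv⟩
  refine ⟨u, hu, v, hv, fun x c hc => ?_⟩
  have h2 : appVec P.app r (2 + 1) ![u, v, x] = some c := (hreal r hr ![u, v, x]).2 c hc
  rw [appVec_three_cons, hru] at h2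
  simp only [Option.bind_some] at h2
  rw [hsv] at h2
  simpa using h2

/- ### Assemblies -/

/-- An assembly over a PCA `(A, φ)`. -/
structure Asm {A : Type} (P : PCA A) : Type 1 where
  carrier : Type
  E : carrier → A → Prop
  total : ∀ x, ∃ a, E x a

/-- `U` tracks the function `f` between (the carriers of) two assemblies. -/
def Tracks (P : PCA A) {X Y : Asm P} (U : Set A) (f : X.carrier → Y.carrier) : Prop :=
  ∀ x a r, X.E x a → r ∈ U → ∃ b, P.app r a = some b ∧ Y.E (f x) b

/-- The category of assemblies over a PCA. -/
instance asmCategory (P : PCA A) : Category (Asm P) where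
  Hom X Y := {f : X.carrier → Y.carrier // ∃ U ∈ P.filt, Tracks P U f}
  id X := ⟨fun x => x, by
    obtain ⟨U, hU, hI⟩ := exists_ireal P
    exact ⟨U, hU, fun x a r hx hr => ⟨a, hI r hr a, hx⟩⟩⟩
  comp {X Y Z} f g := ⟨fun x => g.1 (f.1 x), by
    obtain ⟨U, hU, hf⟩ := f.2
    obtain ⟨V, hV, hg⟩ := g.2
    obtain ⟨W, hW, hkey⟩ := exists_tracker3 P
      (Term.op (.var 1) (.op (.var 0) (.var 2))) hU hV
    refine ⟨W, hW, fun x a w hx hw => ?_⟩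
    obtain ⟨u, hu, v, hv, key⟩ := hkey w hw
    obtain ⟨b, hb, hYb⟩ := hf x a u hx hu
    obtain ⟨c, hc, hZc⟩ := hg (f.1 x) b v hYb hv
    refine ⟨c, key a c ?_, hZc⟩
    rw [eval_comp_term, hb]
    simpa using hc⟩
  id_comp f := Subtype.ext rfl
  comp_id f := Subtype.ext rfl
  assoc f g h := Subtype.ext rfl

/-- The global-sections-like functor `Γ : Asm(A,φ) ⥤ Set`. -/
def Gam (P : PCA A) : Asm P ⥤ Type where
  obj X := X.carrier
  map f := TypeCat.ofHom f.1
  map_id _ := rfl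
  map_comp _ _ := rfl

/-- The constant-object assembly `∇ Y`. -/
def nablaObj (P : PCA A) (Y : Type) : Asm P where
  carrier := Y
  E := fun _ _ => True
  total := fun _ => P.nonemptyCarrier.elim fun a => ⟨a, trivial⟩

/-- The functor `∇ : Set ⥤ Asm(A,φ)`. -/
def Nab (P : PCA A) : Type ⥤ Asm P where
  obj Y := nablaObj P Y
  map {Y Z} f := ⟨f, by
    obtain ⟨U, hU, hI⟩ := exists_ireal P
    exact ⟨U, hU, fun y a r _ hr => ⟨a, hI r hr a, trivial⟩⟩⟩
  map_id _ := Subtype.ext rfl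
  map_comp _ _ := Subtype.ext rfl

/- ### Applicative morphisms -/

/-- The image of a subset under a relation. -/
def relImage (f : A → B → Prop) (V : Set A) : Set B :=
  {b | ∃ a ∈ V, f a b}

/-- `U` tracks the relation `f` as an applicative (pre)morphism. -/
def Tracks₂ (appA : PApp A) (appB : PApp B) (U : Set B) (f : A → B → Prop) : Prop :=
  ∀ a a' c, appA a a' = some c → ∀ b b', f a b → f a' b' → ∀ r ∈ U,
    ∃ d e, appB r b = some d ∧ appB d b' = some e ∧ f c e

/-- `f ⊆ A × B` is an applicative morphism `(A,φ) → (B,ψ)`. -/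
structure IsAppMor (appA : PApp A) (φ : Set (Set A)) (appB : PApp B) (ψ : Set (Set B))
    (f : A → B → Prop) : Prop where
  total : ∀ a, ∃ b, f a b
  tracked : ∃ U ∈ ψ, Tracks₂ appA appB U f
  image : ∀ V ∈ φ, relImage f V ∈ ψ

/-- The preorder `f ≤ f'` on relations `A × B`, relative to `(B,ψ)`. -/
def RelLe (appB : PApp B) (ψ : Set (Set B)) (f f' : A → B → Prop) : Prop :=
  ∃ U ∈ ψ, ∀ a b, f a b → ∀ r ∈ U, ∃ c, appB r b = some c ∧ f' a c

/-- Relational composition: `(RelComp g f) a c ↔ ∃ b, f a b ∧ g b c`. -/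
def RelComp (g : B → C → Prop) (f : A → B → Prop) : A → C → Prop :=
  fun a c => ∃ b, f a b ∧ g b c

/-- The diagonal (identity) relation `δ_A`. -/
def relId (A : Type) : A → A → Prop := fun a b => a = b

/- ### The functor Asm(f) induced by an applicative morphism -/

/-- The action of an applicative morphism on an assembly. -/
def asmObj (P : PCA A) (Q : PCA B) (f : A → B → Prop) (htot : ∀ a, ∃ b, f a b)
    (X : Asm P) : Asm Q where
  carrier := X.carrier
  E := fun x b => ∃ a, X.E x a ∧ f a b
  total := fun x => by
    obtain ⟨a, ha⟩ := X.total x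
    obtain ⟨b, hb⟩ := htot a
    exact ⟨b, a, ha, hb⟩

lemma tracks_asmMap {P : PCA A} {Q : PCA B} {f : A → B → Prop}
    (hf : IsAppMor P.app P.filt Q.app Q.filt f) {X Y : Asm P}
    (g : X.carrier → Y.carrier) (hg : ∃ U ∈ P.filt, Tracks P U g) :
    ∃ W ∈ Q.filt,
      Tracks Q (X := asmObj P Q f hf.total X) (Y := asmObj P Q f hf.total Y) W g := by
  obtain ⟨U, hU, hgU⟩ := hg
  obtain ⟨T, hT, hfT⟩ := hf.tracked
  have hfU : relImage f U ∈ Q.filt := hf.image U hU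
  obtain ⟨W, hW, hkey⟩ := exists_tracker3 Q
    (Term.op (.op (.var 0) (.var 1)) (.var 2)) hT hfU
  refine ⟨W, hW, ?_⟩
  rintro x b w ⟨a, hxa, hab⟩ hw
  obtain ⟨v, hv, y, hy, key⟩ := hkey w hw
  obtain ⟨u, hu, huy⟩ := hy
  obtain ⟨a', ha', hEa'⟩ := hgU x a u hxa hu
  obtain ⟨d, e, hd, he, hfe⟩ := hfT u a a' ha' y b huy hab v hv
  refine ⟨e, key b e ?_, a', hEa', hfe⟩
  rw [eval_app2_term, hd]
  simpa using he

/-- The functor `Asm(f) : Asm(A,φ) ⥤ Asm(B,ψ)` induced by an applicative morphism. -/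
def asmFunctor {P : PCA A} {Q : PCA B} {f : A → B → Prop}
    (hf : IsAppMor P.app P.filt Q.app Q.filt f) : Asm P ⥤ Asm Q where
  obj X := asmObj P Q f hf.total X
  map {X Y} g := ⟨g.1, tracks_asmMap hf g.1 g.2⟩
  map_id _ := Subtype.ext rfl
  map_comp _ _ := Subtype.ext rfl
/- ### Products of PASs -/

/-- Coordinatewise partial application on `A × B`. -/
def prodApp (appA : PApp A) (appB : PApp B) : PApp (A × B) := fun p q =>
  (appA p.1 q.1).bind fun x => (appB p.2 q.2).bind fun y => some (x, y)

/-- The set `φ × ψ` of rectangles `U ×ˢ V` with `U ∈ φ` and `V ∈ ψ`. -/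
def prodFiltSet (φ : Set (Set A)) (ψ : Set (Set B)) : Set (Set (A × B)) :=
  {W | ∃ U ∈ φ, ∃ V ∈ ψ, W = U ×ˢ V}

/-- The filter `⟨φ × ψ⟩` of the pseudocoproduct of two PCAs. -/
def prodFilt (P : PCA A) (Q : PCA B) : Set (Set (A × B)) :=
  genFilter (prodApp P.app Q.app) (prodFiltSet P.filt Q.filt)

/- ### Quasi-surjectivity and computational density -/

/-- A quasi-surjective applicative morphism. -/
def QuasiSurjective (P : PCA A) (Q : PCA B) (f : A → B → Prop) : Prop :=
  ∃ N ∈ Q.filt, ∀ U ∈ Q.filt, ∃ V ∈ P.filt,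
    ∀ n ∈ N, ∀ b ∈ relImage f V, ∃ c, Q.app n b = some c ∧ c ∈ U

/-- A computationally dense applicative morphism. -/
def CompDense (P : PCA A) (Q : PCA B) (f : A → B → Prop) : Prop :=
  ∃ M ∈ Q.filt, ∀ U ∈ Q.filt, ∃ V ∈ P.filt,
    (∀ r ∈ V, ∀ a : A, (P.app r a).isSome) ∧
    (∀ r ∈ V, ∀ a a', P.app r a = some a' →
      (∀ u ∈ U, ∀ b, f a b → (Q.app u b).isSome) →
      ∀ m ∈ M, ∀ b', f a' b' →
        ∃ c, Q.app m b' = some c ∧ ∃ u ∈ U, ∃ b'', f a b'' ∧ Q.app u b'' = some c)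

/- ### Slicing: fiberwise filters over an assembly -/

/-- Fiberwise definedness of the application of two subsets of `I × A`. -/
def fibSubDef (app : PApp A) {I : Type} (U V : Set (I × A)) : Prop :=
  ∀ i r s, (i, r) ∈ U → (i, s) ∈ V → (app r s).isSome

/-- Fiberwise application of two subsets of `I × A`. -/
def fibSubApp (app : PApp A) {I : Type} (U V : Set (I × A)) : Set (I × A) :=
  {p | ∃ r s, (p.1, r) ∈ U ∧ (p.1, s) ∈ V ∧ app r s = some p.2}

/-- A fiberwise filter over `I`. -/
structure IsFibFilter (app : PApp A) (I : Type) (Ψ : Set (Set (I × A))) : Prop where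
  inhab : ∀ U ∈ Ψ, ∀ i : I, ∃ a, (i, a) ∈ U
  upward : ∀ U ∈ Ψ, ∀ V : Set (I × A), U ⊆ V → V ∈ Ψ
  appClosed : ∀ U ∈ Ψ, ∀ V ∈ Ψ, fibSubDef app U V → fibSubApp app U V ∈ Ψ

/-- The filter `φ_I` of the slice PCA over an assembly `I`: the least fiberwise filter
containing `E_I` and all sets `|I| × V` for `V ∈ φ`. -/
def sliceFilt (P : PCA A) (I : Asm P) : Set (Set (I.carrier × A)) :=
  ⋂₀ {Ψ | IsFibFilter P.app I.carrier Ψ ∧ {p : I.carrier × A | I.E p.1 p.2} ∈ Ψ ∧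
      ∀ V ∈ P.filt, {p : I.carrier × A | p.2 ∈ V} ∈ Ψ}

lemma sliceFilt_upward {P : PCA A} {I : Asm P} {U V : Set (I.carrier × A)}
    (hU : U ∈ sliceFilt P I) (hUV : U ⊆ V) : V ∈ sliceFilt P I := by
  rw [sliceFilt, Set.mem_sInter] at hU ⊢
  intro Ψ hΨ
  exact hΨ.1.upward U (hU Ψ hΨ) V hUV

lemma sliceFilt_appClosed {P : PCA A} {I : Asm P} {U V : Set (I.carrier × A)}
    (hU : U ∈ sliceFilt P I) (hV : V ∈ sliceFilt P I) (hdef : fibSubDef P.app U V) :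
    fibSubApp P.app U V ∈ sliceFilt P I := by
  rw [sliceFilt, Set.mem_sInter] at hU hV ⊢
  intro Ψ hΨ
  exact hΨ.1.appClosed U (hU Ψ hΨ) V (hV Ψ hΨ) hdef

lemma base_mem_sliceFilt {P : PCA A} {I : Asm P} {V : Set A} (hV : V ∈ P.filt) :
    {p : I.carrier × A | p.2 ∈ V} ∈ sliceFilt P I := by
  rw [sliceFilt, Set.mem_sInter]
  intro Ψ hΨ
  exact hΨ.2.2 V hV

lemma EI_mem_sliceFilt (P : PCA A) (I : Asm P) :
    {p : I.carrier × A | I.E p.1 p.2} ∈ sliceFilt P I := by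
  rw [sliceFilt, Set.mem_sInter]
  intro Ψ hΨ
  exact hΨ.2.1

lemma exists_fib_tracker3 (P : PCA A) (I : Asm P) (t : Term (2 + 1))
    {U V : Set (I.carrier × A)} (hU : U ∈ sliceFilt P I) (hV : V ∈ sliceFilt P I) :
    ∃ W ∈ sliceFilt P I, ∀ i w, (i, w) ∈ W → ∃ u v, (i, u) ∈ U ∧ (i, v) ∈ V ∧
      ∀ x c : A, Term.eval P.app t ![u, v, x] = some c → P.app w x = some c := by
  obtain ⟨T, hT, hreal⟩ := P.complete 2 t
  have hT' : {p : I.carrier × A | p.2 ∈ T} ∈ sliceFilt P I := base_mem_sliceFilt hT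
  have hdef1 : fibSubDef P.app {p : I.carrier × A | p.2 ∈ T} U := by
    intro i r s hr _
    obtain ⟨s', w', h1, -⟩ := realizes3_chain P hreal hr s s
    simp [h1]
  have h1mem := sliceFilt_appClosed hT' hU hdef1
  have hdef2 : fibSubDef P.app (fibSubApp P.app {p : I.carrier × A | p.2 ∈ T} U) V := by
    rintro i s v ⟨r, u, hr, hu, hru⟩ _
    obtain ⟨s', w', hs', hw'⟩ := realizes3_chain P hreal hr u v
    rw [hru] at hs'
    injection hs' with h
    subst h
    simp [hw']
  refine ⟨_, sliceFilt_appClosed h1mem hV hdef2, ?_⟩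
  rintro i w ⟨s, v, ⟨r, u, hr, hu, hru⟩, hv, hsv⟩
  refine ⟨u, v, hu, hv, fun x c hc => ?_⟩
  have h2 : appVec P.app r (2 + 1) ![u, v, x] = some c := (hreal r hr ![u, v, x]).2 c hc
  rw [appVec_three_cons, hru] at h2
  simp only [Option.bind_some] at h2
  rw [hsv] at h2
  simpa using h2

/- ### The category of assemblies over the slice PCA `(A,φ)/I` -/

/-- Assemblies over the slice PCA `(A,φ)/I`. -/
structure SliceAsm (P : PCA A) (I : Asm P) : Type 1 where
  carrier : Type
  k : carrier → I.carrier
  E : carrier → A → Prop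
  total : ∀ x, ∃ a, E x a

/-- Fiberwise tracking for morphisms of assemblies over `(A,φ)/I`. -/
def SliceTracks (P : PCA A) (I : Asm P) {X Y : SliceAsm P I} (U : Set (I.carrier × A))
    (f : X.carrier → Y.carrier) : Prop :=
  ∀ x a r, X.E x a → (X.k x, r) ∈ U → ∃ b, P.app r a = some b ∧ Y.E (f x) b

instance sliceAsmCategory (P : PCA A) (I : Asm P) : Category (SliceAsm P I) where
  Hom X Y := {f : X.carrier → Y.carrier //
    (∀ x, Y.k (f x) = X.k x) ∧ ∃ U ∈ sliceFilt P I, SliceTracks P I U f}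
  id X := ⟨fun x => x, fun _ => rfl, by
    obtain ⟨U, hU, hI⟩ := exists_ireal P
    exact ⟨{p | p.2 ∈ U}, base_mem_sliceFilt hU,
      fun x a r hx hr => ⟨a, hI r hr a, hx⟩⟩⟩
  comp {X Y Z} f g := ⟨fun x => g.1 (f.1 x), fun x => (g.2.1 (f.1 x)).trans (f.2.1 x), by
    obtain ⟨U, hU, hf⟩ := f.2.2
    obtain ⟨V, hV, hg⟩ := g.2.2
    obtain ⟨W, hW, hkey⟩ := exists_fib_tracker3 P I
      (Term.op (.var 1) (.op (.var 0) (.var 2))) hU hV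
    refine ⟨W, hW, fun x a w hx hw => ?_⟩
    obtain ⟨u, v, hu, hv, key⟩ := hkey (X.k x) w hw
    obtain ⟨b, hb, hYb⟩ := hf x a u hx hu
    have hv' : (Y.k (f.1 x), v) ∈ V := by rw [f.2.1 x]; exact hv
    obtain ⟨c, hc, hZc⟩ := hg (f.1 x) b v hYb hv'
    refine ⟨c, key a c ?_, hZc⟩
    rw [eval_comp_term, hb]
    simpa using hc⟩
  id_comp f := Subtype.ext rfl
  comp_id f := Subtype.ext rfl
  assoc f g h := Subtype.ext rfl

/- ### Families of assemblies (products of PCAs) -/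

/-- The category of families of assemblies over a family of PCAs, with uniformly
tracked families of morphisms; this is the category of assemblies over the product
PCA of the family, taken over the product of the base categories. -/
structure FamAsm {I : Type} {A : I → Type} (P : ∀ i, PCA (A i)) : Type 1 where
  obj : ∀ i, Asm (P i)

instance famAsmCategory {I : Type} {A : I → Type} (P : ∀ i, PCA (A i)) :
    Category (FamAsm P) where
  Hom X Y := {f : ∀ i, (X.obj i).carrier → (Y.obj i).carrier //
    ∃ U : ∀ i, Set (A i), (∀ i, U i ∈ (P i).filt) ∧ ∀ i, Tracks (P i) (U i) (f i)}
  id X := ⟨fun i x => x, by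
    choose U hU using fun i => exists_ireal (P i)
    exact ⟨U, fun i => (hU i).1, fun i x a r hx hr => ⟨a, (hU i).2 r hr a, hx⟩⟩⟩
  comp {X Y Z} f g := ⟨fun i x => g.1 i (f.1 i x), by
    obtain ⟨U, hU, hf⟩ := f.2
    obtain ⟨V, hV, hg⟩ := g.2
    choose W hW using fun i => exists_tracker3 (P i)
      (Term.op (.var 1) (.op (.var 0) (.var 2))) (hU i) (hV i)
    refine ⟨W, fun i => (hW i).1, fun i x a w hx hw => ?_⟩
    obtain ⟨u, hu, v, hv, key⟩ := (hW i).2 w hw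
    obtain ⟨b, hb, hYb⟩ := hf i x a u hx hu
    obtain ⟨c, hc, hZc⟩ := hg i (f.1 i x) b v hYb hv
    refine ⟨c, key a c ?_, hZc⟩
    rw [eval_comp_term, hb]
    simpa using hc⟩
  id_comp f := Subtype.ext rfl
  comp_id f := Subtype.ext rfl
  assoc f g h := Subtype.ext rfl


/-!
Finite limits of assemblies are computed on underlying sets, a point of a pullback being
realized by a pair of realizers of its components. A morphism `e` is a regular epimorphism
exactly when it is a cover: one filter set uniformly turns realizers of `y` into realizers
of points of the fibre `e⁻¹ y`. A cover is the coequalizer of its kernel pair, since a map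
constant on fibres descends along it with a composite tracker; conversely a regular
epimorphism is strong, so the inclusion of its image assembly is invertible, and a tracker
of the inverse is a covering one. Covers are stable under pullback: pair the given realizer
with a lifted realizer of the other component. Finally `Γ ⊣ ∇`, so `∇` preserves limits and
`Γ` preserves epimorphisms, which are regular in `Set`.
-/

section Combinators

variable (P : PCA A) {U V : Set A}

lemma exists_comp_tracker (hU : U ∈ P.filt) (hV : V ∈ P.filt) :
    ∃ W ∈ P.filt, ∀ w ∈ W, ∃ u ∈ U, ∃ v ∈ V, ∀ x y c,
      P.app u x = some y → P.app v y = some c → P.app w x = some c := by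
  obtain ⟨W, hW, hkey⟩ := exists_tracker3 P (.op (.var 1) (.op (.var 0) (.var 2))) hU hV
  refine ⟨W, hW, fun w hw => ?_⟩
  obtain ⟨u, hu, v, hv, key⟩ := hkey w hw
  exact ⟨u, hu, v, hv, fun x y c hy hc => key x c (by simp [eval_comp_term, hy, hc])⟩

lemma exists_s_tracker (hU : U ∈ P.filt) (hV : V ∈ P.filt) :
    ∃ W ∈ P.filt, ∀ w ∈ W, ∃ u ∈ U, ∃ v ∈ V, ∀ x y z c,
      P.app u x = some y → P.app v x = some z → P.app y z = some c → P.app w x = some c := by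
  obtain ⟨W, hW, hkey⟩ :=
    exists_tracker3 P (.op (.op (.var 0) (.var 2)) (.op (.var 1) (.var 2))) hU hV
  refine ⟨W, hW, fun w hw => ?_⟩
  obtain ⟨u, hu, v, hv, key⟩ := hkey w hw
  exact ⟨u, hu, v, hv, fun x y z c hy hz hc => key x c (by simp [Term.eval, hy, hz, hc])⟩

lemma exists_eval_tracker (hU : U ∈ P.filt) :
    ∃ W ∈ P.filt, ∀ w ∈ W, ∃ u ∈ U, ∀ x c, P.app x u = some c → P.app w x = some c := by
  obtain ⟨W, hW, hkey⟩ := exists_tracker3 P (.op (.var 2) (.var 0)) hU (univ_mem_filt P)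
  refine ⟨W, hW, fun w hw => ?_⟩
  obtain ⟨u, hu, _, -, key⟩ := hkey w hw
  exact ⟨u, hu, fun x c hc => key x c (by simpa [Term.eval] using hc)⟩

end Combinators

section Pairing

variable (P : PCA A)

/-- `λ x y z. z x y`: the pairing combinator. -/
def pairTerm : Term 3 := .op (.op (.var 2) (.var 0)) (.var 1)

noncomputable def pairSet : Set A := (P.complete 2 pairTerm).choose

lemma pairSet_mem : pairSet P ∈ P.filt := (P.complete 2 pairTerm).choose_spec.1

lemma pairSet_realizes : Realizes P.app (pairSet P) pairTerm :=
  (P.complete 2 pairTerm).choose_spec.2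

def IsPairCode (a b c : A) : Prop :=
  ∃ p ∈ pairSet P, ∃ d, P.app p a = some d ∧ P.app d b = some c

lemma exists_app_app_of_mem_pairSet {p : A} (hp : p ∈ pairSet P) (a b : A) :
    ∃ d c, P.app p a = some d ∧ P.app d b = some c :=
  realizes3_chain P (pairSet_realizes P) hp a b

lemma exists_isPairCode (a b : A) : ∃ c, IsPairCode P a b c := by
  obtain ⟨p, hp⟩ := P.isFilter.nonempty _ (pairSet_mem P)
  obtain ⟨d, c, hd, hc⟩ := exists_app_app_of_mem_pairSet P hp a b
  exact ⟨c, p, hp, d, hd, hc⟩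

variable {P} in
lemma IsPairCode.app_eq {a b c z d e : A} (h : IsPairCode P a b c)
    (hza : P.app z a = some d) (hdb : P.app d b = some e) : P.app c z = some e := by
  obtain ⟨p, hp, d', hd', hc⟩ := h
  have := (pairSet_realizes P p hp ![a, b, z]).2 e (by simp [pairTerm, Term.eval, hza, hdb])
  simpa [appVec_three_cons, hd', hc] using this

lemma exists_proj_tracker (i : Fin 2) :
    ∃ F ∈ P.filt, ∀ f ∈ F, ∀ a b c, IsPairCode P a b c → P.app f c = some (![a, b] i) := by
  obtain ⟨K, hK, hreal⟩ := P.complete 1 (.var i)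
  obtain ⟨F, hF, hkey⟩ := exists_eval_tracker P hK
  refine ⟨F, hF, fun f hf a b c hc => ?_⟩
  obtain ⟨k, hk, key⟩ := hkey f hf
  have hkab : (P.app k a).bind (P.app · b) = some (![a, b] i) :=
    (hreal k hk ![a, b]).2 _ (by simp [Term.eval])
  obtain ⟨d, hd, hdb⟩ := Option.bind_eq_some_iff.1 hkab
  exact key c _ (hc.app_eq hd hdb)

end Pairing

section Assemblies

open Limits

variable {P : PCA A}

lemma Asm.hom_ext {X Y : Asm P} {f g : X ⟶ Y} (h : ∀ x, f.1 x = g.1 x) : f = g :=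
  Subtype.ext (funext h)

lemma Asm.congr_hom {X Y : Asm P} {f g : X ⟶ Y} (h : f = g) (x : X.carrier) :
    f.1 x = g.1 x :=
  congrFun (congrArg Subtype.val h) x

def Asm.homOfRealizers {X Y : Asm P} (f : X.carrier → Y.carrier)
    (hf : ∀ x a, X.E x a → Y.E (f x) a) : X ⟶ Y :=
  ⟨f, by
    obtain ⟨U, hU, hI⟩ := exists_ireal P
    exact ⟨U, hU, fun x a r hx hr => ⟨a, hI r hr a, hf x a hx⟩⟩⟩

instance : (Gam P).Faithful where
  map_injective h := Asm.hom_ext (ConcreteCategory.congr_hom h)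

variable (P) in
def gamNabAdj : Gam P ⊣ Nab P :=
  Adjunction.mkOfHomEquiv
    { homEquiv := fun _ _ =>
        { toFun := fun g => Asm.homOfRealizers g (fun _ _ _ => trivial)
          invFun := fun h => TypeCat.ofHom h.1
          left_inv := fun _ => rfl
          right_inv := fun _ => Subtype.ext rfl }
      homEquiv_naturality_left_symm := fun _ _ => rfl
      homEquiv_naturality_right := fun _ _ => Subtype.ext rfl }

instance : (Nab P).IsRightAdjoint := ⟨_, ⟨gamNabAdj P⟩⟩

instance : (Gam P).IsLeftAdjoint := ⟨_, ⟨gamNabAdj P⟩⟩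

def asmPb {X Y Z : Asm P} (f : X ⟶ Z) (g : Y ⟶ Z) : Asm P where
  carrier := {p : X.carrier × Y.carrier // f.1 p.1 = g.1 p.2}
  E := fun p c => ∃ a b, X.E p.1.1 a ∧ Y.E p.1.2 b ∧ IsPairCode P a b c
  total p := by
    obtain ⟨a, ha⟩ := X.total p.1.1
    obtain ⟨b, hb⟩ := Y.total p.1.2
    obtain ⟨c, hc⟩ := exists_isPairCode P a b
    exact ⟨c, a, b, ha, hb, hc⟩

variable {X Y Z : Asm P} (f : X ⟶ Z) (g : Y ⟶ Z)

def asmPbFst : asmPb f g ⟶ X :=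
  ⟨fun p => p.1.1, by
    obtain ⟨F, hF, hfst⟩ := exists_proj_tracker P 0
    exact ⟨F, hF, fun _ c r ⟨a, b, ha, _, hc⟩ hr => ⟨a, hfst r hr a b c hc, ha⟩⟩⟩

def asmPbSnd : asmPb f g ⟶ Y :=
  ⟨fun p => p.1.2, by
    obtain ⟨F, hF, hsnd⟩ := exists_proj_tracker P 1
    exact ⟨F, hF, fun _ c r ⟨a, b, _, hb, hc⟩ hr => ⟨b, hsnd r hr a b c hc, hb⟩⟩⟩

def asmPbLift {Q : Asm P} (s : Q ⟶ X) (t : Q ⟶ Y) (hst : ∀ q, f.1 (s.1 q) = g.1 (t.1 q)) :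
    Q ⟶ asmPb f g :=
  ⟨fun q => ⟨(s.1 q, t.1 q), hst q⟩, by
    obtain ⟨Us, hUs, hs⟩ := s.2
    obtain ⟨Ut, hUt, ht⟩ := t.2
    -- `w a = p (u a) (v a)`, with the pairing `p` composed after the tracker `u` of `s`.
    obtain ⟨M, hM, hMspec⟩ := exists_comp_tracker P hUs (pairSet_mem P)
    obtain ⟨W, hW, hWspec⟩ := exists_s_tracker P hM hUt
    refine ⟨W, hW, fun q a w hq hw => ?_⟩
    obtain ⟨m, hm, v, hv, hwm⟩ := hWspec w hw
    obtain ⟨u, hu, p, hp, hmu⟩ := hMspec m hm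
    obtain ⟨a', ha', hXa'⟩ := hs q a u hq hu
    obtain ⟨b', hb', hYb'⟩ := ht q a v hq hv
    obtain ⟨d, c, hd, hc⟩ := exists_app_app_of_mem_pairSet P hp a' b'
    exact ⟨c, hwm a d b' c (hmu a a' d ha' hd) hb' hc, a', b', hXa', hYb', p, hp, d, hd, hc⟩⟩

lemma isPullback_asmPb : IsPullback (asmPbFst f g) (asmPbSnd f g) f g :=
  IsPullback.of_isLimit (c := PullbackCone.mk (asmPbFst f g) (asmPbSnd f g)
      (Asm.hom_ext fun p => p.2)) <|
    PullbackCone.IsLimit.mk _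
      (fun s => asmPbLift f g s.fst s.snd (Asm.congr_hom s.condition))
      (fun _ => rfl) (fun _ => rfl)
      (fun _ _ h₁ h₂ => Asm.hom_ext fun q =>
        Subtype.ext (Prod.ext (Asm.congr_hom h₁ q) (Asm.congr_hom h₂ q)))

instance : HasPullback f g := (isPullback_asmPb f g).hasPullback

variable (P) in
noncomputable def isTerminalNabPUnit : IsTerminal ((Nab P).obj PUnit) :=
  Types.isTerminalPUnit.isTerminalObj (Nab P) _

instance : HasFiniteLimits (Asm P) :=
  have : HasTerminal (Asm P) := (isTerminalNabPUnit P).hasTerminal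
  have : HasPullbacks (Asm P) := hasPullbacks_of_hasLimit_cospan _
  hasFiniteLimits_of_hasTerminal_and_pullbacks

end Assemblies

section RegularEpi

open Limits

variable {P : PCA A} {X Y Z : Asm P}

def Covers (e : X ⟶ Y) : Prop :=
  ∃ U ∈ P.filt, ∀ y b r, Y.E y b → r ∈ U → ∃ c, P.app r b = some c ∧ ∃ x, e.1 x = y ∧ X.E x c

lemma Covers.surjective {e : X ⟶ Y} (he : Covers e) : Function.Surjective e.1 := by
  obtain ⟨U, hU, hcov⟩ := he
  obtain ⟨r, hr⟩ := P.isFilter.nonempty U hU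
  intro y
  obtain ⟨b, hb⟩ := Y.total y
  obtain ⟨-, -, x, hx, -⟩ := hcov y b r hb hr
  exact ⟨x, hx⟩

lemma Covers.epi {e : X ⟶ Y} (he : Covers e) : Epi e :=
  (Gam P).epi_of_epi_map ((epi_iff_surjective _).2 he.surjective)

lemma Covers.exists_fac {e : X ⟶ Y} (he : Covers e) (g : X ⟶ Z)
    (hg : ∀ x x', e.1 x = e.1 x' → g.1 x = g.1 x') : ∃ u : Y ⟶ Z, e ≫ u = g := by
  let s := Function.surjInv he.surjective
  have hs : ∀ x, g.1 (s (e.1 x)) = g.1 x := fun x => hg _ _ (Function.surjInv_eq _ _)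
  obtain ⟨Ue, hUe, hcov⟩ := he
  obtain ⟨Ug, hUg, htr⟩ := g.2
  obtain ⟨W, hW, hWspec⟩ := exists_comp_tracker P hUe hUg
  refine ⟨⟨fun y => g.1 (s y), W, hW, fun y b w hy hw => ?_⟩, Asm.hom_ext hs⟩
  obtain ⟨v, hv, u, hu, hwvu⟩ := hWspec w hw
  obtain ⟨c, hc, x, rfl, hxc⟩ := hcov y b v hy hv
  obtain ⟨d, hd, hZd⟩ := htr x c u hxc hu
  refine ⟨d, hwvu b c d hc hd, ?_⟩
  show Z.E (g.1 (s (e.1 x))) d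
  rwa [hs x]

lemma Covers.isRegularEpi {e : X ⟶ Y} (he : Covers e) : IsRegularEpi e := by
  have := he.epi
  refine IsRegularEpi.of_epi_of_exists fun Z g hg => he.exists_fac g fun x x' hxx' => ?_
  have hg' := congrArg
    (pullback.lift (asmPbFst e e) (asmPbSnd e e) (Asm.hom_ext fun p => p.2) ≫ ·) hg
  simp only [pullback.lift_fst_assoc, pullback.lift_snd_assoc] at hg'
  exact Asm.congr_hom hg' ⟨(x, x'), hxx'⟩

def asmImage (f : X ⟶ Y) : Asm P where
  carrier := Set.range f.1
  E := fun y c => ∃ x, f.1 x = y.1 ∧ X.E x c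
  total := fun ⟨_, x, hx⟩ => (X.total x).imp fun _ hc => ⟨x, hx, hc⟩

def toImage (f : X ⟶ Y) : X ⟶ asmImage f :=
  Asm.homOfRealizers (fun x => ⟨f.1 x, x, rfl⟩) fun x _ hx => ⟨x, rfl, hx⟩

def imageι (f : X ⟶ Y) : asmImage f ⟶ Y :=
  ⟨Subtype.val, by
    obtain ⟨U, hU, htr⟩ := f.2
    refine ⟨U, hU, fun y c r ⟨x, hx, hxc⟩ hr => ?_⟩
    rw [← hx]
    exact htr x c r hxc hr⟩

lemma toImage_comp_imageι (f : X ⟶ Y) : toImage f ≫ imageι f = f := Asm.hom_ext fun _ => rfl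

instance (f : X ⟶ Y) : Mono (imageι f) :=
  (Gam P).mono_of_mono_map ((mono_iff_injective _).2 Subtype.val_injective)

lemma covers_toImage (f : X ⟶ Y) : Covers (toImage f) := by
  obtain ⟨U, hU, hI⟩ := exists_ireal P
  exact ⟨U, hU, fun y c r ⟨x, hx, hxc⟩ hr => ⟨c, hI r hr c, x, Subtype.ext hx, hxc⟩⟩

lemma covers_of_isIso_imageι (e : X ⟶ Y) [IsIso (imageι e)] : Covers e := by
  obtain ⟨U, hU, htr⟩ := (inv (imageι e)).2
  refine ⟨U, hU, fun y b r hy hr => ?_⟩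
  obtain ⟨c, hc, x, hx, hxc⟩ := htr y b r hy hr
  exact ⟨c, hc, x, hx.trans (Asm.congr_hom (IsIso.inv_hom_id (imageι e)) y), hxc⟩

lemma isIso_imageι_of_isRegularEpi (e : X ⟶ Y) [IsRegularEpi e] : IsIso (imageι e) := by
  have : StrongEpi (toImage e ≫ imageι e) := by rw [toImage_comp_imageι]; infer_instance
  have := strongEpi_of_strongEpi (toImage e) (imageι e)
  exact isIso_of_mono_of_strongEpi _

lemma isRegularEpi_iff_covers (e : X ⟶ Y) : IsRegularEpi e ↔ Covers e :=
  ⟨fun _ => have := isIso_imageι_of_isRegularEpi e; covers_of_isIso_imageι e,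
    Covers.isRegularEpi⟩

lemma covers_asmPbFst (f : X ⟶ Z) {g : Y ⟶ Z} (hg : Covers g) : Covers (asmPbFst f g) := by
  obtain ⟨Ug, hUg, hcov⟩ := hg
  obtain ⟨Uf, hUf, htr⟩ := f.2
  -- `w a = p a (v (u a))`: pair a realizer of `x` with one of a `g`-preimage of `f x`.
  obtain ⟨N, hN, hNspec⟩ := exists_comp_tracker P hUf hUg
  obtain ⟨W, hW, hWspec⟩ := exists_s_tracker P (pairSet_mem P) hN
  refine ⟨W, hW, fun x a w hx hw => ?_⟩
  obtain ⟨p, hp, n, hn, hwpn⟩ := hWspec w hw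
  obtain ⟨u, hu, v, hv, hnuv⟩ := hNspec n hn
  obtain ⟨b, hb, hZb⟩ := htr x a u hx hu
  obtain ⟨c, hc, y, hy, hYc⟩ := hcov (f.1 x) b v hZb hv
  obtain ⟨d, e, hd, he⟩ := exists_app_app_of_mem_pairSet P hp a c
  exact ⟨e, hwpn a d c e hd (hnuv a b c hb hc) he,
    ⟨(x, y), hy.symm⟩, rfl, a, c, hx, hYc, p, hp, d, hd, he⟩

instance : (MorphismProperty.regularEpi (Asm P)).IsStableUnderBaseChange :=
  .of_forall_exists_isPullback fun f g _ hg => ⟨_, _, _, isPullback_asmPb f g,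
    (isRegularEpi_iff_covers _).2 (covers_asmPbFst f ((isRegularEpi_iff_covers g).1 hg))⟩

end RegularEpi

section Preservation

open Limits

variable {P : PCA A}

lemma isPullback_map_gam_asmPb {X Y Z : Asm P} (f : X ⟶ Z) (g : Y ⟶ Z) :
    IsPullback ((Gam P).map (asmPbFst f g)) ((Gam P).map (asmPbSnd f g))
      ((Gam P).map f) ((Gam P).map g) :=
  (Types.isPullback_iff _ _ _ _).2
    ⟨by simp only [← Functor.map_comp, (isPullback_asmPb f g).w],
      fun _ _ h => Subtype.ext (Prod.ext h.1 h.2), fun x y h => ⟨⟨(x, y), h⟩, rfl, rfl⟩⟩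

instance : PreservesLimit (Functor.empty.{0} (Asm P)) (Gam P) :=
  preservesLimit_of_preserves_limit_cone (isTerminalNabPUnit P)
    ((isLimitMapConeEmptyConeEquiv _ _).symm Types.isTerminalPUnit)

instance {X Y Z : Asm P} (f : X ⟶ Z) (g : Y ⟶ Z) : PreservesLimit (cospan f g) (Gam P) :=
  preservesLimit_of_preserves_limit_cone (isPullback_asmPb f g).isLimit
    ((isLimitMapConePullbackConeEquiv _ (isPullback_asmPb f g).w).symm
      (isPullback_map_gam_asmPb f g).isLimit)

instance : PreservesFiniteLimits (Gam P) :=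
  have := preservesLimitsOfShape_pempty_of_preservesTerminal (Gam P)
  have : PreservesLimitsOfShape WalkingCospan (Gam P) :=
    ⟨fun {K} => preservesLimit_of_iso_diagram _ (diagramIsoCospan K).symm⟩
  preservesFiniteLimits_of_preservesTerminal_and_pullbacks (Gam P)

lemma covers_map_nab {X Y : Type} (e : X ⟶ Y) (he : Function.Surjective e) :
    Covers ((Nab P).map e) := by
  obtain ⟨U, hU, hI⟩ := exists_ireal P
  refine ⟨U, hU, fun y b r _ hr => ?_⟩
  obtain ⟨x, hx⟩ := he y
  exact ⟨b, hI r hr b, x, hx, trivial⟩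

end Preservation

/-- `Asm(A,φ)` is a regular category: it has finite limits, every morphism
factors as a regular epimorphism followed by a monomorphism, and regular epimorphisms are
stable under pullback; moreover `Γ` and `∇` preserve finite limits and regular epimorphisms. -/
theorem statement8 (A : Type) (P : PCA A) :
    Limits.HasFiniteLimits (Asm P) ∧
    (∀ (X Y : Asm P) (f : X ⟶ Y), ∃ (Z : Asm P) (e : X ⟶ Z) (m : Z ⟶ Y),
        Nonempty (RegularEpi e) ∧ Mono m ∧ e ≫ m = f) ∧
    (∀ (W X Y Z : Asm P) (fst : W ⟶ X) (snd : W ⟶ Y) (f : X ⟶ Z) (g : Y ⟶ Z),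
        IsPullback fst snd f g → Nonempty (RegularEpi g) → Nonempty (RegularEpi fst)) ∧
    Nonempty (Limits.PreservesFiniteLimits (Gam P)) ∧
    (∀ (X Y : Asm P) (e : X ⟶ Y), Nonempty (RegularEpi e) →
        Nonempty (RegularEpi ((Gam P).map e))) ∧
    Nonempty (Limits.PreservesFiniteLimits (Nab P)) ∧
    (∀ (X Y : Type) (e : X ⟶ Y), Nonempty (RegularEpi e) →
        Nonempty (RegularEpi ((Nab P).map e))) := by
  refine ⟨inferInstance, fun X Y f => ?_, fun W X Y Z fst snd f g hpb ⟨hg⟩ => ?_,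
    ⟨inferInstance⟩, fun X Y e ⟨he⟩ => ?_, ⟨inferInstance⟩, fun X Y e ⟨he⟩ => ?_⟩
  · exact ⟨asmImage f, toImage f, imageι f, (covers_toImage f).isRegularEpi.regularEpi,
      inferInstance, toImage_comp_imageι f⟩
  · exact (MorphismProperty.of_isPullback (P := MorphismProperty.regularEpi (Asm P)) hpb.flip
      (isRegularEpi_of_regularEpi hg)).regularEpi
  · have := he.epi
    exact ⟨regularEpiOfEpi _⟩
  · exact (covers_map_nab e ((epi_iff_surjective e).1 he.epi)).isRegularEpi.regularEpi

end PcaPaper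
end

section
/- Let (A,φ) be a PCA over Set and let e: X → Y be a morphism in Asm(A,φ). Then e is a regular epimorphism in Asm(A,φ) if and only if there exists U ∈ φ witnessing this, namely: for all y ∈ |Y|, a ∈ A with E_Y(y,a), and r ∈ U, the product ra is defined and there exists x ∈ |X| with e(x) = y and E_X(x, ra). -/
open CategoryTheory

namespace PcaPaper

variable {A B C : Type}

/-!
A regular epimorphism `e` is surjective (test it against maps into `∇ Prop`), so the realizers
of the points of `X` can be pushed forward along `e` to an assembly on `|Y|`; the map `X → e_* X`
coequalizes whatever `e` coequalizes, and a tracker of the induced map `Y → e_* X`, whose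
underlying function is the identity, is the required `U`. Conversely, given `U`, a map out of
`X` that is constant on the fibres of `e` descends to `Y` by precomposing its tracker with `U`;
hence `e` is the coequalizer of its kernel pair, whose realizers are codes `λc. c a a'` of pairs.
-/

section Combinators

variable (P : PCA A)

lemma exists_realizer_two (t : Term 2) :
    ∃ U ∈ P.filt, ∀ r ∈ U, ∀ a, ∃ s, P.app r a = some s ∧
      ∀ b c, t.eval P.app ![a, b] = some c → P.app s b = some c := by
  obtain ⟨U, hU, hreal⟩ := P.complete 1 t
  refine ⟨U, hU, fun r hr a => ?_⟩
  obtain ⟨s, hs⟩ : ∃ s, P.app r a = some s :=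
    Option.isSome_iff_exists.mp (hreal r hr ![a, a]).1
  refine ⟨s, hs, fun b c hc => ?_⟩
  have h : (P.app r a).bind (fun s => P.app s b) = some c := (hreal r hr ![a, b]).2 c hc
  rwa [hs, Option.bind_some] at h

lemma exists_realizer_three (t : Term 3) :
    ∃ U ∈ P.filt, ∀ r ∈ U, ∀ a b, ∃ s d, P.app r a = some s ∧ P.app s b = some d ∧
      ∀ c v, t.eval P.app ![a, b, c] = some v → P.app d c = some v := by
  obtain ⟨U, hU, hreal⟩ := P.complete 2 t
  refine ⟨U, hU, fun r hr a b => ?_⟩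
  obtain ⟨s, d, hs, hd⟩ := realizes3_chain P hreal hr a b
  refine ⟨s, d, hs, hd, fun c v hv => ?_⟩
  have h := (hreal r hr ![a, b, c]).2 v hv
  rwa [appVec_three_cons, hs, Option.bind_some, hd, Option.bind_some] at h

/-- `d` behaves as the pair `λc. c a a'`. -/
def IsPair (a a' d : A) : Prop :=
  ∀ c v, (P.app c a).bind (fun m => P.app m a') = some v → P.app d c = some v

lemma exists_isPair (a a' : A) : ∃ d, IsPair P a a' d := by
  obtain ⟨T, hT, hpair⟩ := exists_realizer_three P (.op (.op (.var 2) (.var 0)) (.var 1))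
  obtain ⟨r, hr⟩ := P.isFilter.nonempty T hT
  obtain ⟨s, d, -, -, hd⟩ := hpair r hr a a'
  exact ⟨d, fun c v hv => hd c v (by simpa [Term.eval] using hv)⟩

lemma exists_unpair (t : Term 2) :
    ∃ F ∈ P.filt, ∀ f ∈ F, ∀ a a' d, IsPair P a a' d →
      ∀ v, t.eval P.app ![a, a'] = some v → P.app f d = some v := by
  obtain ⟨K, hK, hk⟩ := exists_realizer_two P t
  obtain ⟨F, hF, hf⟩ := exists_tracker3 P (.op (.var 2) (.var 0)) hK hK
  refine ⟨F, hF, fun f hfF a a' d hd v hv => ?_⟩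
  obtain ⟨k, hkK, _, -, hfk⟩ := hf f hfF
  obtain ⟨m, hkm, hmv⟩ := hk k hkK a
  -- `f d = d k = k a a' = t(a, a')`
  have hdk : P.app d k = some v := hd k v (by simpa [hkm] using hmv a' v hv)
  exact hfk d v (by simpa [Term.eval] using hdk)

end Combinators

namespace Asm

variable {P : PCA A} {X Y Z : Asm P}

def toNabla (f : Y.carrier → C) : Y ⟶ nablaObj P C :=
  ⟨f, by
    obtain ⟨U, hU, hid⟩ := exists_ireal P
    exact ⟨U, hU, fun _ a r _ hr => ⟨a, hid r hr a, trivial⟩⟩⟩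

lemma epi_iff_surjective (e : X ⟶ Y) : Epi e ↔ Function.Surjective e.1 := by
  refine ⟨fun _ y => ?_, fun hsurj => ⟨fun g h hgh => ?_⟩⟩
  · have h : toNabla (fun y => ∃ x, e.1 x = y) = toNabla (fun _ => True) :=
      (cancel_epi e).1 (Subtype.ext (funext fun x => eq_true ⟨x, rfl⟩))
    exact of_eq_true (congrFun (congrArg Subtype.val h) y)
  · refine Subtype.ext (funext fun y => ?_)
    obtain ⟨x, rfl⟩ := hsurj y
    exact congrFun (congrArg Subtype.val hgh) x

def pushforward (e : X ⟶ Y) (he : Function.Surjective e.1) : Asm P where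
  carrier := Y.carrier
  E y b := ∃ x, e.1 x = y ∧ X.E x b
  total y := by
    obtain ⟨x, rfl⟩ := he y
    obtain ⟨a, ha⟩ := X.total x
    exact ⟨a, x, rfl, ha⟩

def toPushforward (e : X ⟶ Y) (he : Function.Surjective e.1) : X ⟶ pushforward e he :=
  ⟨e.1, by
    obtain ⟨U, hU, hid⟩ := exists_ireal P
    exact ⟨U, hU, fun x a r hx hr => ⟨a, hid r hr a, x, rfl, hx⟩⟩⟩

lemma exists_tracks_of_regularEpi {e : X ⟶ Y} (re : RegularEpi e) (f : X ⟶ Z)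
    (g : Y.carrier → Z.carrier) (hg : ∀ x, g (e.1 x) = f.1 x) :
    ∃ U ∈ P.filt, Tracks P (X := Y) (Y := Z) U g := by
  have hsurj := (epi_iff_surjective e).1 (re.epi e)
  have hf : re.left ≫ f = re.right ≫ f := Subtype.ext (funext fun w => by
    change f.1 (re.left.1 w) = f.1 (re.right.1 w)
    rw [← hg, ← hg]
    exact congrArg g (congrFun (congrArg Subtype.val re.w) w))
  let m : Y ⟶ Z := Limits.Cofork.IsColimit.desc re.isColimit f hf
  have hm : e ≫ m = f := Limits.Cofork.IsColimit.π_desc' re.isColimit f hf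
  have hmg : m.1 = g := funext fun y => by
    obtain ⟨x, rfl⟩ := hsurj y
    exact (congrFun (congrArg Subtype.val hm) x).trans (hg x).symm
  exact hmg ▸ m.2

def kernelPair (e : X ⟶ Y) : Asm P where
  carrier := {p : X.carrier × X.carrier // e.1 p.1 = e.1 p.2}
  E p d := ∃ a a', X.E p.1.1 a ∧ X.E p.1.2 a' ∧ IsPair P a a' d
  total p := by
    obtain ⟨a, ha⟩ := X.total p.1.1
    obtain ⟨a', ha'⟩ := X.total p.1.2
    obtain ⟨d, hd⟩ := exists_isPair P a a'
    exact ⟨d, a, a', ha, ha', hd⟩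

def kernelPair.fst (e : X ⟶ Y) : kernelPair e ⟶ X :=
  ⟨fun p => p.1.1, by
    obtain ⟨F, hF, hunpair⟩ := exists_unpair P (.var 0)
    exact ⟨F, hF, fun _ d f ⟨a, a', ha, _, hd⟩ hf =>
      ⟨a, hunpair f hf a a' d hd a (by simp [Term.eval]), ha⟩⟩⟩

def kernelPair.snd (e : X ⟶ Y) : kernelPair e ⟶ X :=
  ⟨fun p => p.1.2, by
    obtain ⟨F, hF, hunpair⟩ := exists_unpair P (.var 1)
    exact ⟨F, hF, fun _ d f ⟨a, a', _, ha', hd⟩ hf =>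
      ⟨a', hunpair f hf a a' d hd a' (by simp [Term.eval]), ha'⟩⟩⟩

lemma kernelPair.condition (e : X ⟶ Y) : kernelPair.fst e ≫ e = kernelPair.snd e ≫ e :=
  Subtype.ext (funext fun p => p.2)

lemma kernelPair.apply_eq_of_condition {e : X ⟶ Y} {f : X ⟶ Z}
    (hf : kernelPair.fst e ≫ f = kernelPair.snd e ≫ f) {x x' : X.carrier}
    (hxx' : e.1 x = e.1 x') : f.1 x = f.1 x' :=
  congrFun (congrArg Subtype.val hf) ⟨(x, x'), hxx'⟩

def IsUniformlySurjective (e : X ⟶ Y) : Prop :=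
  ∃ U ∈ P.filt, ∀ y a, Y.E y a → ∀ r ∈ U,
    ∃ b, P.app r a = some b ∧ ∃ x, e.1 x = y ∧ X.E x b

lemma IsUniformlySurjective.surjective {e : X ⟶ Y} (he : IsUniformlySurjective e) :
    Function.Surjective e.1 := fun y => by
  obtain ⟨U, hU, hsec⟩ := he
  obtain ⟨a, ha⟩ := Y.total y
  obtain ⟨r, hr⟩ := P.isFilter.nonempty U hU
  obtain ⟨-, -, x, hx, -⟩ := hsec y a ha r hr
  exact ⟨x, hx⟩

lemma IsUniformlySurjective.exists_comp_eq {e : X ⟶ Y} (he : IsUniformlySurjective e)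
    (f : X ⟶ Z) (hf : ∀ x x', e.1 x = e.1 x' → f.1 x = f.1 x') :
    ∃ m : Y ⟶ Z, e ≫ m = f := by
  let sec := Function.surjInv he.surjective
  have hsec : ∀ x, f.1 (sec (e.1 x)) = f.1 x := fun x =>
    hf _ _ (Function.surjInv_eq he.surjective _)
  obtain ⟨U, hU, hU_sec⟩ := he
  obtain ⟨V, hV, hV_tr⟩ := f.2
  obtain ⟨W, hW, hW_comp⟩ := exists_tracker3 P (.op (.var 1) (.op (.var 0) (.var 2))) hU hV
  refine ⟨⟨fun y => f.1 (sec y), W, hW, fun y a w hy hw => ?_⟩, Subtype.ext (funext hsec)⟩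
  obtain ⟨u, hu, v, hv, hwuv⟩ := hW_comp w hw
  obtain ⟨b, hub, x, rfl, hxb⟩ := hU_sec y a hy u hu
  obtain ⟨c, hvc, hc⟩ := hV_tr x b v hxb hv
  refine ⟨c, hwuv a c ?_, ?_⟩
  · rw [eval_comp_term, hub]
    exact hvc
  · change Z.E (f.1 (sec (e.1 x))) c
    rwa [hsec]

noncomputable def isColimitKernelPair {e : X ⟶ Y} (he : IsUniformlySurjective e) :
    Limits.IsColimit (Limits.Cofork.ofπ e (kernelPair.condition e)) :=
  have : Epi e := (epi_iff_surjective e).2 he.surjective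
  Limits.Cofork.IsColimit.ofExistsUnique fun s => by
    obtain ⟨m, hm⟩ :=
      he.exists_comp_eq s.π fun _ _ => kernelPair.apply_eq_of_condition s.condition
    exact ⟨m, hm, fun m' hm' => (cancel_epi e).1 (hm'.trans hm.symm)⟩

noncomputable def regularEpiOfIsUniformlySurjective {e : X ⟶ Y} (he : IsUniformlySurjective e) :
    RegularEpi e where
  W := kernelPair e
  left := kernelPair.fst e
  right := kernelPair.snd e
  w := kernelPair.condition e
  isColimit := isColimitKernelPair he

lemma isUniformlySurjective_of_regularEpi {e : X ⟶ Y} (re : RegularEpi e) :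
    IsUniformlySurjective e := by
  have hsurj := (epi_iff_surjective e).1 (re.epi e)
  obtain ⟨U, hU, htr⟩ := exists_tracks_of_regularEpi re (toPushforward e hsurj) id fun _ => rfl
  exact ⟨U, hU, fun y a hy r hr => htr y a r hy hr⟩

end Asm

/-- A morphism `e : X → Y` in `Asm(A,φ)` is a regular epimorphism iff there
is a witness `U ∈ φ`: for all `y`, `a` with `E_Y(y,a)` and all `r ∈ U`, `ra` is defined and
there is `x ∈ |X|` with `e(x) = y` and `E_X(x, ra)`. -/
theorem statement9 (A : Type) (P : PCA A) (X Y : Asm P) (e : X ⟶ Y) :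
    Nonempty (RegularEpi e) ↔
      ∃ U ∈ P.filt, ∀ y a, Y.E y a → ∀ r ∈ U,
        ∃ b, P.app r a = some b ∧ ∃ x, e.1 x = y ∧ X.E x b :=
  ⟨fun ⟨re⟩ => Asm.isUniformlySurjective_of_regularEpi re,
    fun he => ⟨Asm.regularEpiOfIsUniformlySurjective he⟩⟩

end PcaPaper
end
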